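/- Consider n bins ordered cyclically and n rounds, where in round t each of the n bins is independently included in the offered set C_t with probability 1/2, the sets C_1, …, C_n being independent. Place ball t in the first bin of C_t encountered when traversing the bins cyclically starting from bin t+1 (if C_t is empty the round fails). Then with probability tending to 1 as n → ∞, every round succeeds and the maximal load over all bins is at most 3·√(log n). -/

import Mathlib

/-!
A round fails only if none of the `n` bins is offered, which has probability `2⁻ⁿ`. Ball `t`
lands in bin `i` exactly when bin `i` is offered and the `dₜ = i - (t + 1)` bins preceding it
cyclically from `t + 1` are not, which has probability `2^-(dₜ + 1)`; distinct rounds have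
distinct `dₜ`. By the union bound over `i` and over `k`-sets `T` of rounds, the probability
that some bin receives `k` balls is at most `n` times the sum over `k`-subsets `J ⊆ ℕ` of
`∏_{j ∈ J} 2^-(j + 1)`, which is at most `2^-(k choose 2)`. For
`k = ⌊3 √(log n)⌋ + 1` we have `k choose 2 ≥ 3 log n`, so both failure probabilities are
at most `1 / n²`.
-/

open MeasureTheory Finset

/-- The bin in which ball `t` is placed by the cyclic first-fit strategy: among the bins
offered in round `t` (bin `b` is offered iff `ω t b = true`), take the first bin
encountered when traversing the bins cyclically starting from bin `t + 1`. (If no bin is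
offered, i.e. the round fails, we return `t` as a junk value.) -/
def cyclicPlace (n : ℕ) [NeZero n] (ω : Fin n → Fin n → Bool) (t : Fin n) : Fin n :=
  if h : (Finset.univ.filter fun j : Fin n => ω t (t + 1 + j) = true).Nonempty then
    t + 1 + (Finset.univ.filter fun j : Fin n => ω t (t + 1 + j) = true).min' h
  else t

open scoped ENNReal

theorem sum_powersetCard_prod_pow_le {q : ℝ≥0∞} (hq : q ≤ 2⁻¹) (s : Finset ℕ) :
    ∀ a k, (∀ j ∈ s, a ≤ j) →
      ∑ J ∈ s.powersetCard k, ∏ j ∈ J, q ^ (j + 1) ≤ q ^ (k * a + k.choose 2) := by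
  have hq1 : q ≤ 1 := hq.trans (by norm_num)
  induction s using Finset.induction_on_min with
  | empty =>
    rintro a (_ | k) -
    · simp
    · rw [powersetCard_eq_empty.2 (by simp), sum_empty]; exact zero_le
  | insert m s hm ih =>
    rintro a (_ | k) ha
    · simp
    have hms : m ∉ s := fun h => lt_irrefl m (hm m h)
    have ham : a ≤ m := ha m (mem_insert_self m s)
    have hs : ∀ j ∈ s, a + 1 ≤ j := fun j hj => ham.trans_lt (hm j hj)
    set X := q ^ ((k + 1) * a + (k + 1).choose 2)
    have hchoose : (k + 1).choose 2 = k.choose 2 + k := by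
      rw [Nat.choose_succ_succ, Nat.choose_one_right, add_comm]
    have h_without : ∑ J ∈ s.powersetCard (k + 1), ∏ j ∈ J, q ^ (j + 1) ≤ X * q ^ (k + 1) :=
      calc _ ≤ q ^ ((k + 1) * (a + 1) + (k + 1).choose 2) := ih (a + 1) (k + 1) hs
        _ = X * q ^ (k + 1) := by rw [← pow_add]; ring_nf
    have h_with : ∑ J ∈ (s.powersetCard k).image (insert m), ∏ j ∈ J, q ^ (j + 1) ≤ X * q :=
      calc ∑ J ∈ (s.powersetCard k).image (insert m), ∏ j ∈ J, q ^ (j + 1)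
          ≤ ∑ J ∈ s.powersetCard k, ∏ j ∈ insert m J, q ^ (j + 1) :=
            sum_image_le_of_nonneg fun _ _ => zero_le
        _ = q ^ (m + 1) * ∑ J ∈ s.powersetCard k, ∏ j ∈ J, q ^ (j + 1) := by
            rw [mul_sum]
            exact sum_congr rfl fun J hJ =>
              prod_insert fun h => hms ((mem_powersetCard.1 hJ).1 h)
        _ ≤ q ^ (a + 1) * q ^ (k * (a + 1) + k.choose 2) :=
            mul_le_mul' (pow_le_pow_right_of_le_one' hq1 (by omega)) (ih (a + 1) k hs)
        _ = X * q := by rw [← pow_add, ← pow_succ, hchoose]; ring_nf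
    calc ∑ J ∈ (insert m s).powersetCard (k + 1), ∏ j ∈ J, q ^ (j + 1)
        ≤ ∑ J ∈ s.powersetCard (k + 1), ∏ j ∈ J, q ^ (j + 1)
          + ∑ J ∈ (s.powersetCard k).image (insert m), ∏ j ∈ J, q ^ (j + 1) := by
          rw [powersetCard_succ_insert hms, ← sum_union_inter]
          exact le_self_add
      _ ≤ X * q ^ (k + 1) + X * q := add_le_add h_without h_with
      _ ≤ X * (q + q) := by
          rw [← mul_add]
          gcongr
          exact pow_le_of_le_one zero_le hq1 k.succ_ne_zero
      _ ≤ X := by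
          refine mul_le_of_le_one_right' ((add_le_add hq hq).trans ?_)
          rw [ENNReal.inv_two_add_inv_two]

theorem sum_powersetCard_prod_pow_comp_le {ι : Type*} {q : ℝ≥0∞} (hq : q ≤ 2⁻¹) (f : ι ↪ ℕ)
    (s : Finset ι) (k : ℕ) :
    ∑ T ∈ s.powersetCard k, ∏ t ∈ T, q ^ (f t + 1) ≤ q ^ k.choose 2 := by
  have := sum_powersetCard_prod_pow_le hq (s.map f) 0 k fun _ _ => Nat.zero_le _
  rw [powersetCard_map, sum_map] at this
  simpa using this

theorem measure_pi_uniformOfFintype_setOf_eqOn {ι α : Type*} [Fintype ι] [Fintype α] [Nonempty α]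
    [MeasurableSpace α] [MeasurableSingletonClass α] (s : Finset ι) (g : ι → α) :
    Measure.pi (fun _ : ι => (PMF.uniformOfFintype α).toMeasure) {f | ∀ i ∈ s, f i = g i} =
      (Fintype.card α : ℝ≥0∞)⁻¹ ^ #s := by
  change Measure.pi _ ((s : Set ι).pi fun i => {g i}) = _
  simp only [Measure.pi_pi_finset, PMF.toMeasure_apply_singleton _ _ (measurableSet_singleton _),
    PMF.uniformOfFintype_apply, prod_const]

theorem mul_self_le_two_pow {n : ℕ} (hn : 4 ≤ n) : n * n ≤ 2 ^ n := by
  induction n, hn using Nat.le_induction with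
  | base => norm_num
  | succ m hm ih => rw [pow_succ]; nlinarith

theorem mul_self_le_two_pow_choose_two {n : ℕ} (hn : 3 ≤ n) :
    n * n ≤ 2 ^ (⌊3 * √(Real.log n)⌋₊ + 1).choose 2 := by
  set L := Real.log n
  set s := √L
  set k := ⌊3 * s⌋₊ + 1
  have hn0 : (0 : ℝ) < n := by positivity
  have hL : 1 ≤ L := by
    rw [Real.le_log_iff_exp_le hn0]
    exact Real.exp_one_lt_d9.le.trans (le_trans (by norm_num) (Nat.ofNat_le_cast.2 hn))
  have hs : 1 ≤ s := Real.one_le_sqrt.2 hL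
  have hsL : s * s = L := Real.mul_self_sqrt (by linarith)
  have hk : 3 * s ≤ k := by
    have := Nat.lt_floor_add_one (3 * s)
    push_cast [k]
    linarith
  have hchoose : 3 * L ≤ k.choose 2 := by
    rw [Nat.cast_choose_two]
    nlinarith
  have hlog2 : (0.6931471803 : ℝ) < Real.log 2 := Real.log_two_gt_d9
  suffices (n * n : ℝ) ≤ 2 ^ k.choose 2 by exact_mod_cast this
  calc (n * n : ℝ) = Real.exp (2 * L) := by rw [two_mul, Real.exp_add, Real.exp_log hn0]
    _ ≤ Real.exp (k.choose 2 * Real.log 2) := Real.exp_le_exp.2 (by nlinarith)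
    _ = 2 ^ k.choose 2 := by rw [← Real.log_pow, Real.exp_log (by positivity)]

theorem natCast_mul_inv_two_pow_le_inv {n m : ℕ} (h : n * n ≤ 2 ^ m) :
    (n : ℝ≥0∞) * 2⁻¹ ^ m ≤ (n : ℝ≥0∞)⁻¹ := by
  rw [ENNReal.le_inv_iff_mul_le, mul_right_comm, ← ENNReal.inv_pow, ← div_eq_mul_inv]
  exact ENNReal.div_le_of_le_mul (by rw [one_mul]; exact_mod_cast h)

section CyclicFirstFit

variable {n : ℕ} [NeZero n]

def cyclicIco (c i : Fin n) : Finset (Fin n) := {b | b - c < i - c}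

theorem card_cyclicIco (c i : Fin n) : #(cyclicIco c i) = (i - c : Fin n) := by
  have : cyclicIco c i = (Iio (i - c)).map (Equiv.addLeft c).toEmbedding := by
    ext b
    simp [cyclicIco, neg_add_eq_sub]
  rw [this, card_map, Fin.card_Iio]

def firstOfferedFrom (c i : Fin n) : Set (Fin n → Bool) :=
  {f | f i = true ∧ ∀ b ∈ cyclicIco c i, f b = false}

theorem measure_firstOfferedFrom (c i : Fin n) :
    Measure.pi (fun _ : Fin n => (PMF.uniformOfFintype Bool).toMeasure) (firstOfferedFrom c i) =
      2⁻¹ ^ ((i - c : Fin n) + 1 : ℕ) := by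
  have hi : i ∉ cyclicIco c i := by simp [cyclicIco]
  have : firstOfferedFrom c i = {f | ∀ b ∈ insert i (cyclicIco c i), f b = decide (b = i)} := by
    ext f
    simp only [firstOfferedFrom, Set.mem_ofPred_eq, forall_mem_insert, decide_true]
    refine and_congr_right fun _ => forall₂_congr fun b hb => ?_
    simp [show b ≠ i from fun h => hi (h ▸ hb)]
  rw [this, measure_pi_uniformOfFintype_setOf_eqOn, card_insert_of_notMem hi, card_cyclicIco]
  simp

theorem mem_firstOfferedFrom_min' (f : Fin n → Bool) (c : Fin n)
    (h : ({j | f (c + j) = true} : Finset (Fin n)).Nonempty) :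
    f ∈ firstOfferedFrom c (c + ({j | f (c + j) = true} : Finset (Fin n)).min' h) := by
  refine ⟨(mem_filter.1 (min'_mem _ h)).2, fun b hb => ?_⟩
  simp only [cyclicIco, add_sub_cancel_left, mem_filter, mem_univ, true_and] at hb
  by_contra hfb
  refine (min'_le _ (b - c) ?_).not_gt hb
  simpa using hfb

theorem cyclicPlace_mem_firstOfferedFrom (ω : Fin n → Fin n → Bool) (t : Fin n)
    (h : ∃ j, ω t (t + 1 + j) = true) : ω t ∈ firstOfferedFrom (t + 1) (cyclicPlace n ω t) := by
  obtain ⟨j, hj⟩ := h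
  have hne : ({j | ω t (t + 1 + j) = true} : Finset (Fin n)).Nonempty := ⟨j, by simpa using hj⟩
  rw [cyclicPlace, dif_pos hne]
  exact mem_firstOfferedFrom_min' _ _ hne

def load (ω : Fin n → Fin n → Bool) (i : Fin n) : ℕ := #{t | cyclicPlace n ω t = i}

theorem compl_setOf_succeeds_and_load_lt_subset (k : ℕ) :
    {ω : Fin n → Fin n → Bool | (∀ t, ∃ j, ω t (t + 1 + j) = true) ∧ ∀ i, load ω i < k}ᶜ ⊆
      (⋃ t, Function.eval t ⁻¹' {f | ∀ b ∈ univ, f b = false}) ∪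
        ⋃ i, ⋃ T ∈ (univ : Finset (Fin n)).powersetCard k,
          {ω | ∀ t ∈ T, ω t ∈ firstOfferedFrom (t + 1) i} := by
  intro ω hω
  by_cases hsucc : ∀ t, ∃ j, ω t (t + 1 + j) = true
  · obtain ⟨i, hi⟩ : ∃ i, k ≤ load ω i := by simpa [hsucc] using hω
    obtain ⟨T, hT, hTk⟩ := exists_subset_card_eq (s := {t | cyclicPlace n ω t = i}) hi
    refine Or.inr (Set.mem_iUnion.2 ⟨i, Set.mem_iUnion₂.2
      ⟨T, mem_powersetCard.2 ⟨subset_univ T, hTk⟩, fun t ht => ?_⟩⟩)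
    rw [← (mem_filter.1 (hT ht)).2]
    exact cyclicPlace_mem_firstOfferedFrom ω t (hsucc t)
  · push Not at hsucc
    obtain ⟨t, ht⟩ := hsucc
    exact Or.inl (Set.mem_iUnion.2 ⟨t, fun b _ => by simpa using ht (b - (t + 1))⟩)

theorem measure_compl_setOf_succeeds_and_load_lt_le (k : ℕ) :
    (Measure.pi fun _ : Fin n => Measure.pi fun _ : Fin n =>
        (PMF.uniformOfFintype Bool).toMeasure)
      {ω | (∀ t, ∃ j, ω t (t + 1 + j) = true) ∧ ∀ i, load ω i < k}ᶜ ≤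
      n * 2⁻¹ ^ n + n * 2⁻¹ ^ k.choose 2 := by
  set ν := Measure.pi fun _ : Fin n => (PMF.uniformOfFintype Bool).toMeasure
  have h_fail (t : Fin n) :
      Measure.pi (fun _ => ν) (Function.eval t ⁻¹' {f | ∀ b ∈ univ, f b = false}) = 2⁻¹ ^ n := by
    rw [(measurePreserving_eval _ t).measure_preimage
      (Set.toFinite _).measurableSet.nullMeasurableSet, measure_pi_uniformOfFintype_setOf_eqOn]
    simp
  have h_overload (i : Fin n) :
      Measure.pi (fun _ => ν) (⋃ T ∈ (univ : Finset (Fin n)).powersetCard k,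
        {ω | ∀ t ∈ T, ω t ∈ firstOfferedFrom (t + 1) i}) ≤ 2⁻¹ ^ k.choose 2 := by
    let d : Fin n ↪ ℕ := ⟨fun t => (i - (t + 1) : Fin n),
      Fin.val_injective.comp (sub_right_injective.comp (add_left_injective 1))⟩
    calc _ ≤ ∑ T ∈ (univ : Finset (Fin n)).powersetCard k,
          Measure.pi (fun _ => ν) {ω | ∀ t ∈ T, ω t ∈ firstOfferedFrom (t + 1) i} :=
          measure_biUnion_finset_le _ _
      _ = ∑ T ∈ (univ : Finset (Fin n)).powersetCard k, ∏ t ∈ T, 2⁻¹ ^ (d t + 1) :=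
          sum_congr rfl fun T _ => (Measure.pi_pi_finset _ _ T).trans
            (prod_congr rfl fun t _ => measure_firstOfferedFrom _ _)
      _ ≤ _ := sum_powersetCard_prod_pow_comp_le le_rfl d univ k
  calc _ ≤ _ := measure_mono (compl_setOf_succeeds_and_load_lt_subset k)
    _ ≤ ∑ t : Fin n, Measure.pi (fun _ => ν) (Function.eval t ⁻¹' {f | ∀ b ∈ univ, f b = false})
        + ∑ i : Fin n, Measure.pi (fun _ => ν) (⋃ T ∈ (univ : Finset (Fin n)).powersetCard k,
          {ω | ∀ t ∈ T, ω t ∈ firstOfferedFrom (t + 1) i}) :=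
        (measure_union_le _ _).trans
          (add_le_add (measure_iUnion_fintype_le _ _) (measure_iUnion_fintype_le _ _))
    _ ≤ _ := by
        rw [sum_congr rfl fun t _ => h_fail t]
        grw [sum_le_sum fun i _ => h_overload i]
        simp only [sum_const, card_univ, Fintype.card_fin, nsmul_eq_mul, le_refl]

end CyclicFirstFit

/-- Lemma 6.2 of the paper: in the model where in each of `n` rounds every one of the `n`
cyclically ordered bins is offered independently with probability `1/2` (rounds being
independent), the cyclic first-fit strategy succeeds in every round and achieves maximal
load at most `3 √(log n)`, with probability tending to `1` as `n → ∞`. -/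
theorem cyclic_first_fit_load (ε : ℝ) (hε : 0 < ε) :
    ∃ n₀ : ℕ, ∀ n : ℕ, n₀ ≤ n → ∀ [NeZero n],
      1 - ε ≤ ((Measure.pi fun _ : Fin n => Measure.pi fun _ : Fin n =>
            (PMF.uniformOfFintype Bool).toMeasure)
          {ω | (∀ t : Fin n, ∃ j : Fin n, ω t (t + 1 + j) = true) ∧
            ∀ i : Fin n, ((Finset.univ.filter fun t => cyclicPlace n ω t = i).card : ℝ)
              ≤ 3 * Real.sqrt (Real.log n)}).toReal := by
  refine ⟨max 4 ⌈2 / ε⌉₊, fun n hn _ => ?_⟩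
  have hn4 : 4 ≤ n := le_of_max_le_left hn
  set μ := Measure.pi fun _ : Fin n => Measure.pi fun _ : Fin n =>
    (PMF.uniformOfFintype Bool).toMeasure
  set G := {ω : Fin n → Fin n → Bool |
    (∀ t, ∃ j, ω t (t + 1 + j) = true) ∧ ∀ i, load ω i < ⌊3 * √(Real.log n)⌋₊ + 1}
  have hG : μ Gᶜ ≤ (n : ℝ≥0∞)⁻¹ + (n : ℝ≥0∞)⁻¹ :=
    (measure_compl_setOf_succeeds_and_load_lt_le _).trans <| add_le_add
      (natCast_mul_inv_two_pow_le_inv (mul_self_le_two_pow hn4))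
      (natCast_mul_inv_two_pow_le_inv (mul_self_le_two_pow_choose_two (by omega)))
  have hGε : μ.real Gᶜ ≤ ε := by
    have hinv : (n : ℝ≥0∞)⁻¹ ≠ ⊤ := ENNReal.inv_ne_top.2 (Nat.cast_ne_zero.2 (by omega))
    refine (ENNReal.toReal_mono (ENNReal.add_ne_top.2 ⟨hinv, hinv⟩) hG).trans ?_
    rw [ENNReal.toReal_add hinv hinv, ENNReal.toReal_inv, ENNReal.toReal_natCast, ← two_mul,
      ← div_eq_mul_inv, div_le_iff₀ (by positivity), mul_comm]
    exact (div_le_iff₀ hε).1 (Nat.ceil_le.1 (le_of_max_le_right hn))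
  refine le_trans ?_ (ENNReal.toReal_mono (measure_ne_top _ _) (measure_mono (s := G) ?_))
  · rw [probReal_compl_eq_one_sub (Set.toFinite G).measurableSet] at hGε
    exact (sub_le_sub_left hGε 1).trans_eq (sub_sub_cancel 1 _)
  · rintro ω ⟨hsucc, hload⟩
    exact ⟨hsucc, fun i => (Nat.le_floor_iff (by positivity)).1 (Nat.lt_succ_iff.1 (hload i))⟩
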